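/- arXiv:1301.5875 — 3 statements merged into one kernel-verified Lean document; each statement's English description precedes it below -/
import Mathlib

section
/- For every integer n ≥ 2 and every ε₀ with 0 < ε₀ < 1, the iterates ε_{m+1} = T_n(ε_m) with T_n(ε) = (ε/2^(n-1))·(2^(n-1) + 1 − ε) form a strictly increasing sequence converging to 1. -/
/-!
On `(0, 1)` the map `T ε = ε / c * (c + 1 - ε)` (with `c = 2 ^ (n - 1) ≥ 1`) satisfies
`T ε - ε = ε (1 - ε) / c > 0` and `1 - T ε = (1 - ε) (c - ε) / c > 0`, so the orbit of `ε₀` is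
strictly increasing and bounded by `1`. Its limit is a fixed point of the continuous map `T`,
and the only fixed points of `T` are `0` and `1`; the limit is at least `ε₀ > 0`, hence it is `1`.
-/

open Set Filter Topology Function

theorem strictMono_iterate_of_mapsTo_of_lt {α : Type*} [Preorder α] {f : α → α} {s : Set α}
    (hs : MapsTo f s s) (hf : ∀ x ∈ s, x < f x) {x : α} (hx : x ∈ s) :
    StrictMono fun m : ℕ => f^[m] x :=
  strictMono_nat_of_lt_succ fun m => by
    simpa only [iterate_succ_apply'] using hf _ (hs.iterate m hx)

noncomputable def bsMap (c ε : ℝ) : ℝ := ε / c * (c + 1 - ε)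

namespace bsMap

variable {c : ℝ}

theorem sub_self_eq (hc : c ≠ 0) (ε : ℝ) : bsMap c ε - ε = ε * (1 - ε) / c := by
  unfold bsMap; field_simp; ring

theorem one_sub_eq (hc : c ≠ 0) (ε : ℝ) : 1 - bsMap c ε = (1 - ε) * (c - ε) / c := by
  unfold bsMap; field_simp; ring

theorem self_lt (hc : 0 < c) {ε : ℝ} (hε : ε ∈ Ioo (0 : ℝ) 1) : ε < bsMap c ε := by
  have := sub_self_eq hc.ne' ε
  have : 0 < ε * (1 - ε) / c := div_pos (mul_pos hε.1 (sub_pos.2 hε.2)) hc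
  linarith

theorem mapsTo_Ioo (hc : 1 ≤ c) : MapsTo (bsMap c) (Ioo 0 1) (Ioo 0 1) := fun ε hε => by
  have hc₀ : 0 < c := by linarith
  refine ⟨hε.1.trans (self_lt hc₀ hε), ?_⟩
  have := one_sub_eq hc₀.ne' ε
  have : 0 < (1 - ε) * (c - ε) / c :=
    div_pos (mul_pos (sub_pos.2 hε.2) (by linarith [hε.2])) hc₀
  linarith

theorem isFixedPt_iff (hc : c ≠ 0) {ε : ℝ} : IsFixedPt (bsMap c) ε ↔ ε = 0 ∨ ε = 1 := by
  rw [IsFixedPt, ← sub_eq_zero, sub_self_eq hc, div_eq_zero_iff, or_iff_left hc,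
    mul_eq_zero, sub_eq_zero, eq_comm (a := 1)]

theorem continuous (c : ℝ) : Continuous (bsMap c) := by
  unfold bsMap; fun_prop

theorem strictMono_iterate (hc : 1 ≤ c) {ε₀ : ℝ} (h₀ : ε₀ ∈ Ioo (0 : ℝ) 1) :
    StrictMono fun m : ℕ => (bsMap c)^[m] ε₀ :=
  strictMono_iterate_of_mapsTo_of_lt (mapsTo_Ioo hc) (fun _ => self_lt (by linarith)) h₀

theorem tendsto_iterate_one (hc : 1 ≤ c) {ε₀ : ℝ} (h₀ : ε₀ ∈ Ioo (0 : ℝ) 1) :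
    Tendsto (fun m : ℕ => (bsMap c)^[m] ε₀) atTop (𝓝 1) := by
  have hmono := strictMono_iterate hc h₀
  have hbdd : BddAbove (range fun m : ℕ => (bsMap c)^[m] ε₀) :=
    ⟨1, forall_mem_range.2 fun m => ((mapsTo_Ioo hc).iterate m h₀).2.le⟩
  have hlim := tendsto_atTop_ciSup hmono.monotone hbdd
  have hpos : 0 < ⨆ m : ℕ, (bsMap c)^[m] ε₀ := h₀.1.trans_le (le_ciSup hbdd 0)
  rcases (isFixedPt_iff (by positivity)).1
      (isFixedPt_of_tendsto_iterate hlim (continuous c).continuousAt) with h | h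
  · exact absurd h hpos.ne'
  · rwa [h] at hlim

end bsMap

theorem bs_iterates_increase_to_one_general (n : ℕ) (ε₀ : ℝ) (h0 : 0 < ε₀) (h1 : ε₀ < 1) :
    StrictMono (fun m : ℕ =>
      (fun ε : ℝ => ε / 2 ^ (n - 1) * (2 ^ (n - 1) + 1 - ε))^[m] ε₀) ∧
    Filter.Tendsto (fun m : ℕ =>
      (fun ε : ℝ => ε / 2 ^ (n - 1) * (2 ^ (n - 1) + 1 - ε))^[m] ε₀)
      Filter.atTop (nhds 1) := by
  have hc : (1 : ℝ) ≤ 2 ^ (n - 1) := one_le_pow₀ one_le_two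
  exact ⟨bsMap.strictMono_iterate hc ⟨h0, h1⟩, bsMap.tendsto_iterate_one hc ⟨h0, h1⟩⟩

theorem bs_iterates_increase_to_one (n : ℕ) (hn : 2 ≤ n) (ε₀ : ℝ) (h0 : 0 < ε₀) (h1 : ε₀ < 1) :
    StrictMono (fun m : ℕ =>
      (fun ε : ℝ => ε / 2 ^ (n - 1) * (2 ^ (n - 1) + 1 - ε))^[m] ε₀) ∧
    Filter.Tendsto (fun m : ℕ =>
      (fun ε : ℝ => ε / 2 ^ (n - 1) * (2 ^ (n - 1) + 1 - ε))^[m] ε₀)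
      Filter.atTop (nhds 1) :=
  bs_iterates_increase_to_one_general n ε₀ h0 h1
end

section
/- Let n ≥ 2. Applying the generalized BS wiring (inputs y_i = x_i·(1−a_i) to the second box and outputs c_i = a_i ⊕ b_i) to two independent copies with state components P^PR·P^PR, P^PR·P^c, P^c·P^PR, and P^c·P^c yields, respectively, the boxes P^PR, P^PR, 2^{1−n}·P^PR + (1−2^{1−n})·P^c, and P^c. -/
/-
Both boxes are uniform on the `2^(n-1)` outputs of a prescribed parity. Hence wiring any such
box into `P^c` only constrains the parity of `c`, which gives `P^PR ∘ P^c = P^PR` and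
`P^c ∘ P^c = P^c`. Replacing the second box `P^c` by `P^PR` changes only the `a = 0` term of the
wiring sum, since for `a ≠ 0` some party inputs `y_i = 0` and the two boxes agree once
`∏ y_i = 0`. For the first box `P^PR` that term vanishes (it forces `∏ x_i = 0`), and for `P^c`
it equals `2^(1-n) (P^PR - P^c)`.
-/

/-- The n-partite PR box: uniform over outputs with XOR of outputs = AND of inputs. -/
noncomputable def PRbox (n : ℕ) (a x : Fin n → ZMod 2) : ℝ :=
  if (∑ i, a i) = (∏ i, x i) then (2:ℝ) ^ (-((n:ℤ) - 1)) else 0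

/-- The even-parity box: uniform over outputs with XOR of outputs = 0. -/
noncomputable def Cbox (n : ℕ) (a x : Fin n → ZMod 2) : ℝ :=
  if (∑ i, a i) = 0 then (2:ℝ) ^ (-((n:ℤ) - 1)) else 0

/-- The generalized BS wiring: party i inputs x_i to the first box P (getting a_i),
inputs y_i = x_i·(1 - a_i) to the second box Q (getting b_i), and outputs
c_i = a_i ⊕ b_i.  (Over ZMod 2, 1 - a_i = 1 + a_i and b_i = c_i + a_i.) -/
noncomputable def wire (n : ℕ) (P Q : (Fin n → ZMod 2) → (Fin n → ZMod 2) → ℝ)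
    (c x : Fin n → ZMod 2) : ℝ :=
  ∑ a : Fin n → ZMod 2, P a x * Q (fun i => c i + a i) (fun i => x i * (1 + a i))

open Finset

/-- `PRbox n = parityBox n (∏ ·)` and `Cbox n = parityBox n 0` hold by `rfl`. -/
noncomputable def parityBox (n : ℕ) (f : (Fin n → ZMod 2) → ZMod 2) (a x : Fin n → ZMod 2) : ℝ :=
  if ∑ i, a i = f x then (2:ℝ) ^ (-((n:ℤ) - 1)) else 0

section
variable {n : ℕ}

lemma card_filter_sum_eq (hn : 0 < n) (s : ZMod 2) :
    #{a : Fin n → ZMod 2 | ∑ i, a i = s} = 2 ^ (n - 1) := by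
  let parity : (Fin n → ZMod 2) →+ ZMod 2 :=
    AddMonoidHom.mk' (fun a => ∑ i, a i) fun _ _ => sum_add_distrib
  have hsurj : ∀ t, t ∈ Set.range parity := fun t =>
    ⟨Pi.single ⟨0, hn⟩ t, by simp [parity]⟩
  have hfib : ∀ t, #{a | parity a = t} = #{a | parity a = s} := fun t =>
    AddMonoidHom.card_fiber_eq_of_mem_range parity (hsurj t) (hsurj s)
  have htotal : 2 ^ n = 2 * #{a | parity a = s} := by
    simpa [hfib, Fintype.card_fun] using
      (card_eq_sum_card_fiberwise (f := parity) (s := univ) (t := univ) (by simp))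
  change #{a | parity a = s} = _
  obtain ⟨m, rfl⟩ := Nat.exists_eq_add_of_lt hn
  simp only [pow_succ, zero_add, Nat.add_sub_cancel] at htotal ⊢
  omega

lemma two_pow_sub_one_mul_zpow_neg (hn : 0 < n) : (2:ℝ) ^ (n - 1) * 2 ^ (-((n:ℤ) - 1)) = 1 := by
  rw [← zpow_natCast, ← zpow_add₀ two_ne_zero, Nat.cast_sub hn]
  simp

lemma sum_filter_parityBox (hn : 0 < n) (f : (Fin n → ZMod 2) → ZMod 2) (s : ZMod 2)
    (x : Fin n → ZMod 2) :
    ∑ a with ∑ i, a i = s, parityBox n f a x = if s = f x then 1 else 0 := by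
  split_ifs with h
  · have hconst : ∀ a ∈ ({a | ∑ i, a i = s} : Finset (Fin n → ZMod 2)),
        parityBox n f a x = 2 ^ (-((n:ℤ) - 1)) := fun a ha =>
      if_pos ((mem_filter.1 ha).2.trans h)
    rw [sum_congr rfl hconst, sum_const, card_filter_sum_eq hn, nsmul_eq_mul]
    exact_mod_cast two_pow_sub_one_mul_zpow_neg hn
  · exact sum_eq_zero fun a ha => if_neg (by rw [(mem_filter.1 ha).2]; exact h)

lemma wire_Cbox (P : (Fin n → ZMod 2) → (Fin n → ZMod 2) → ℝ) (c x : Fin n → ZMod 2) :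
    wire n P (Cbox n) c x = 2 ^ (-((n:ℤ) - 1)) * ∑ a with ∑ i, a i = ∑ i, c i, P a x := by
  rw [mul_sum, sum_filter, wire]
  refine sum_congr rfl fun a _ => ?_
  simp only [Cbox, sum_add_distrib, CharTwo.add_eq_zero, eq_comm (a := ∑ i, c i)]
  split_ifs <;> ring

lemma wire_parityBox_Cbox (hn : 0 < n) (f : (Fin n → ZMod 2) → ZMod 2) :
    wire n (parityBox n f) (Cbox n) = parityBox n f := by
  ext c x
  rw [wire_Cbox, sum_filter_parityBox hn, parityBox, mul_ite, mul_one, mul_zero]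

lemma prod_mul_one_add_eq_zero {a : Fin n → ZMod 2} (ha : a ≠ 0) (x : Fin n → ZMod 2) :
    ∏ i, x i * (1 + a i) = 0 := by
  obtain ⟨i, hi⟩ := Function.ne_iff.1 ha
  refine prod_eq_zero (mem_univ i) ?_
  have : a i = 1 := by
    rw [Pi.zero_apply] at hi
    generalize a i = z at hi ⊢
    revert z; decide
  rw [this, CharTwo.add_self_eq_zero, mul_zero]

lemma PRbox_eq_Cbox_of_prod_eq_zero {b y : Fin n → ZMod 2} (h : ∏ i, y i = 0) :
    PRbox n b y = Cbox n b y := by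
  rw [PRbox, Cbox, h]

lemma wire_sub_wire {P Q Q' : (Fin n → ZMod 2) → (Fin n → ZMod 2) → ℝ}
    (hQ : ∀ b y, ∏ i, y i = 0 → Q b y = Q' b y) (c x : Fin n → ZMod 2) :
    wire n P Q c x - wire n P Q' c x = P 0 x * (Q c x - Q' c x) := by
  rw [wire, wire, ← sum_sub_distrib, ← sum_erase_add _ _ (mem_univ 0), sum_eq_zero, zero_add]
  · simp [mul_sub]
  · intro a ha
    rw [hQ _ _ (prod_mul_one_add_eq_zero (ne_of_mem_erase ha) x), sub_self]

lemma PRbox_zero_mul_sub_Cbox (c x : Fin n → ZMod 2) :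
    PRbox n 0 x * (PRbox n c x - Cbox n c x) = 0 := by
  by_cases h : ∏ i, x i = 0
  · rw [PRbox_eq_Cbox_of_prod_eq_zero (b := c) h, sub_self, mul_zero]
  · rw [PRbox, if_neg (by simpa [eq_comm] using h), zero_mul]

end

theorem bs_wiring_one_copy_rules (n : ℕ) (hn : 2 ≤ n) :
    (∀ c x, wire n (PRbox n) (PRbox n) c x = PRbox n c x) ∧
    (∀ c x, wire n (PRbox n) (Cbox n) c x = PRbox n c x) ∧
    (∀ c x, wire n (Cbox n) (PRbox n) c x
        = (2:ℝ) ^ ((1:ℤ) - n) * PRbox n c x + (1 - (2:ℝ) ^ ((1:ℤ) - n)) * Cbox n c x) ∧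
    (∀ c x, wire n (Cbox n) (Cbox n) c x = Cbox n c x) := by
  have hn0 : 0 < n := by omega
  have hPR_C : wire n (PRbox n) (Cbox n) = PRbox n := wire_parityBox_Cbox hn0 _
  have hC_C : wire n (Cbox n) (Cbox n) = Cbox n := wire_parityBox_Cbox hn0 _
  have hsub (P) :=
    wire_sub_wire (P := P) fun b _ => PRbox_eq_Cbox_of_prod_eq_zero (n := n) (b := b)
  refine ⟨fun c x => ?_, by simp [hPR_C], fun c x => ?_, by simp [hC_C]⟩
  · have h := hsub (PRbox n) c x
    rw [hPR_C, PRbox_zero_mul_sub_Cbox] at h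
    linear_combination h
  · have h := hsub (Cbox n) c x
    have hC0 : Cbox n 0 x = 2 ^ ((1:ℤ) - n) := by simp [Cbox]
    rw [hC_C, hC0] at h
    linear_combination h
end

section
/- Let P₁ be a full-correlation box on parties 1,...,k₂ with output parity g₁(x₁,...,x_{k₂}) and P₂ a full-correlation box on parties k₁,...,n with output parity ∏_{i=k₁}^{k₃} x_i, where 0 < k₁ < k₂ < k₃ ≤ n, run independently in parallel. If party i outputs c_i = a_i for i < k₁, c_i = a_i ⊕ b_i for k₁ ≤ i ≤ k₂, and c_i = b_i for i > k₂, then the resulting joint conditional distribution equals the n-partite full-correlation box with output parity g₁(x₁,...,x_{k₂}) ⊕ ∏_{i=k₁}^{k₃} x_i. -/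
/-!
Write the outputs of the two boxes as `a` and `c - a` (over `ZMod 2`, `c + a = c - a`).
Each box is uniform on a coset of the functions supported on its party set with prescribed
sum, so the composed box counts the `a` lying in one coset with `c - a` in the other.
Summing over all parties shows there are none unless `∑ c` is the sum of the two parities;
otherwise `a` is forced outside the overlap `A ∩ B` of the party sets, and shifting by
that forced part identifies the solutions with the functions on `A ∩ B` of prescribed sum,
of which there are `|G| ^ (|A ∩ B| - 1)`. The overlap has `k₂ - k₁ + 1` parties, which makes
the weights multiply to `2 ^ (-(n - 1))`.
-/

open Finset

namespace FullCorrelation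

variable {α G : Type*} [Fintype α] [DecidableEq α] [AddCommGroup G] [Fintype G] [DecidableEq G]

/-- The support of a full-correlation box on the parties `S` with output parity `s`, its
outputs padded with `0` outside `S`. -/
def parityFiber (S : Finset α) (s : G) : Finset (α → G) :=
  {a | ∑ i ∈ S, a i = s ∧ ∀ i ∉ S, a i = 0}

theorem mem_parityFiber_iff_sum_univ {S : Finset α} {s : G} {a : α → G} :
    a ∈ parityFiber S s ↔ (∀ i ∉ S, a i = 0) ∧ ∑ i, a i = s := by
  have hsum : (∀ i ∉ S, a i = 0) → ∑ i ∈ S, a i = ∑ i, a i := fun h ↦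
    sum_subset (subset_univ S) fun i _ ↦ h i
  simp only [parityFiber, mem_filter, mem_univ, true_and]
  exact ⟨fun ⟨hs, h⟩ ↦ ⟨h, hsum h ▸ hs⟩, fun ⟨h, hs⟩ ↦ ⟨hsum h ▸ hs, h⟩⟩

theorem card_filter_forall_notMem_eq_zero (T : Finset α) :
    #{a : α → G | ∀ i ∉ T, a i = 0} = Fintype.card G ^ #T := by
  have : ({a : α → G | ∀ i ∉ T, a i = 0} : Finset _) =
      Fintype.piFinset fun i ↦ if i ∈ T then univ else {0} := by
    ext a
    simp only [mem_filter, mem_univ, true_and, Fintype.mem_piFinset]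
    refine forall_congr' fun i ↦ ?_
    split_ifs with hi <;> simp [hi]
  simp [this, Fintype.card_piFinset, prod_apply_ite]

theorem card_parityFiber {S : Finset α} (hS : S.Nonempty) (s : G) :
    #(parityFiber S s) = Fintype.card G ^ (#S - 1) := by
  obtain ⟨i₀, hi₀⟩ := hS
  rw [← card_erase_of_mem hi₀, ← card_filter_forall_notMem_eq_zero]
  -- The coordinate `i₀` of an element of the fiber is determined by the others.
  refine card_nbij' (fun a ↦ a - Pi.single i₀ (a i₀))
    (fun b ↦ b + Pi.single i₀ (s - ∑ i, b i)) ?_ ?_ ?_ ?_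
  · intro a ha
    simp only [coe_filter, mem_univ, true_and, Set.mem_ofPred_eq, mem_coe,
      mem_parityFiber_iff_sum_univ] at ha ⊢
    intro i hi
    by_cases h : i = i₀
    · subst h; simp
    · simp [h, ha.1 i (by simpa [h] using hi)]
  · intro b hb
    simp only [coe_filter, mem_univ, true_and, Set.mem_ofPred_eq, mem_coe,
      mem_parityFiber_iff_sum_univ] at hb ⊢
    refine ⟨fun i hi ↦ ?_, ?_⟩
    · have h : i ≠ i₀ := by rintro rfl; exact hi hi₀
      simp [h, hb i (by simp [hi])]
    · simp [sum_add_distrib]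
  · intro a ha
    simp only [mem_coe, mem_parityFiber_iff_sum_univ] at ha
    simp [sum_sub_distrib, ha.2]
  · intro b hb
    simp only [coe_filter, mem_univ, true_and, Set.mem_ofPred_eq] at hb
    have : b i₀ = 0 := hb i₀ (by simp)
    simp [this]

variable {A B : Finset α}

/-- `Bᶜ.piecewise c 0` is the part of `a` forced outside `A ∩ B`: `a` vanishes off `A`
and agrees with `c` off `B`. -/
theorem mem_parityFiber_and_sub_mem_iff {c : α → G} {s₁ s₂ : G} (hAB : A ∪ B = univ)
    (hc : ∑ i, c i = s₁ + s₂) (a : α → G) :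
    a ∈ parityFiber A s₁ ∧ c - a ∈ parityFiber B s₂ ↔
      a - Bᶜ.piecewise c 0 ∈ parityFiber (A ∩ B) (s₁ - ∑ i, Bᶜ.piecewise c 0 i) := by
  simp only [mem_parityFiber_iff_sum_univ, Pi.sub_apply, sum_sub_distrib, sub_left_inj]
  have hsupport : ((∀ i ∉ A, a i = 0) ∧ ∀ i ∉ B, c i - a i = 0) ↔
      ∀ i ∉ A ∩ B, a i - Bᶜ.piecewise c 0 i = 0 := by
    rw [← forall_and]
    refine forall_congr' fun i ↦ ?_
    have hi : i ∈ A ∪ B := hAB ▸ mem_univ i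
    by_cases hA : i ∈ A <;> by_cases hB : i ∈ B <;> simp_all [sub_eq_zero, eq_comm]
  have hsum : (∑ i, a i = s₁ ∧ ∑ i, c i - ∑ i, a i = s₂) ↔ ∑ i, a i = s₁ :=
    ⟨And.left, fun h ↦ ⟨h, by rw [hc, h]; abel⟩⟩
  rw [← hsupport, ← hsum]
  tauto

theorem card_filter_mem_parityFiber_and_sub_mem (hAB : A ∪ B = univ) (hK : (A ∩ B).Nonempty)
    (c : α → G) (s₁ s₂ : G) :
    #{a | a ∈ parityFiber A s₁ ∧ c - a ∈ parityFiber B s₂} =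
      if ∑ i, c i = s₁ + s₂ then Fintype.card G ^ (#(A ∩ B) - 1) else 0 := by
  split_ifs with hc
  · rw [← card_parityFiber hK (s₁ - ∑ i, Bᶜ.piecewise c 0 i)]
    refine card_nbij' (· - Bᶜ.piecewise c 0) (· + Bᶜ.piecewise c 0) ?_ ?_ ?_ ?_
    · intro a ha
      simpa [mem_parityFiber_and_sub_mem_iff hAB hc] using ha
    · intro b hb
      simpa [mem_parityFiber_and_sub_mem_iff hAB hc] using hb
    · intro a _; simp
    · intro b _; simp
  · rw [card_eq_zero, filter_eq_empty_iff]
    rintro a - ⟨ha, hca⟩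
    obtain ⟨-, rfl⟩ := mem_parityFiber_iff_sum_univ.mp ha
    obtain ⟨-, rfl⟩ := mem_parityFiber_iff_sum_univ.mp hca
    simp [sum_sub_distrib] at hc

end FullCorrelation

theorem Fin.card_filter_val_lt_inter_filter_le_val_add_one {n k₁ k₂ : ℕ} (h0 : 0 < k₁)
    (h12 : k₁ ≤ k₂) (h2n : k₂ ≤ n) :
    #((univ.filter fun i : Fin n ↦ (i : ℕ) < k₂) ∩ univ.filter fun i ↦ k₁ ≤ (i : ℕ) + 1) =
      k₂ - k₁ + 1 := by
  have : (univ.filter fun i : Fin n ↦ (i : ℕ) < k₂) ∩ univ.filter (k₁ ≤ ·.val + 1) =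
      (univ.filter fun i : Fin n ↦ (i : ℕ) < k₂) \ univ.filter (·.val < k₁ - 1) := by
    ext; simp
  rw [this, card_sdiff_of_subset (fun i ↦ by simp; omega), Fin.card_filter_val_lt,
    Fin.card_filter_val_lt]
  omega

open FullCorrelation in
/-- Party `p` is the index `i : Fin n` with `p = i + 1`. Both boxes are padded with output `0`
outside their parties, so the composition rule for `c` reads `c = a + b`. -/
theorem parallel_composition_of_full_correlation_boxes_general
    (n k₁ k₂ k₃ : ℕ) (h0 : 0 < k₁) (h12 : k₁ < k₂) (h23 : k₂ < k₃) (h3n : k₃ ≤ n)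
    (g₁ : (Fin n → ZMod 2) → ZMod 2)
    (c x : Fin n → ZMod 2) :
    (∑ a : Fin n → ZMod 2,
      (if (∑ i ∈ Finset.univ.filter (fun i : Fin n => (i : ℕ) < k₂), a i) = g₁ x
            ∧ (∀ i : Fin n, ¬ (i : ℕ) < k₂ → a i = 0)
        then (2:ℝ) ^ (-((k₂:ℤ) - 1)) else 0)
      *
      (if (∑ i ∈ Finset.univ.filter (fun i : Fin n => k₁ ≤ (i : ℕ) + 1), (c i + a i))
            = (∏ i ∈ Finset.univ.filter
                (fun i : Fin n => k₁ ≤ (i : ℕ) + 1 ∧ (i : ℕ) < k₃), x i)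
            ∧ (∀ i : Fin n, ¬ k₁ ≤ (i : ℕ) + 1 → c i + a i = 0)
        then (2:ℝ) ^ (-((n:ℤ) - (k₁:ℤ))) else 0))
    =
    (if (∑ i, c i)
          = g₁ x + (∏ i ∈ Finset.univ.filter
              (fun i : Fin n => k₁ ≤ (i : ℕ) + 1 ∧ (i : ℕ) < k₃), x i)
      then (2:ℝ) ^ (-((n:ℤ) - 1)) else 0) := by
  set A : Finset (Fin n) := {i | (i : ℕ) < k₂}
  set B : Finset (Fin n) := {i | k₁ ≤ (i : ℕ) + 1}
  set p := ∏ i ∈ univ.filter (fun i : Fin n => k₁ ≤ (i : ℕ) + 1 ∧ (i : ℕ) < k₃), x i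
  have hAB : A ∪ B = univ := by ext; simp [A, B]; omega
  have hK : #(A ∩ B) = k₂ - k₁ + 1 :=
    Fin.card_filter_val_lt_inter_filter_le_val_add_one h0 h12.le (by omega)
  have hbox₁ (a : Fin n → ZMod 2) :
      (∑ i ∈ A, a i = g₁ x ∧ ∀ i : Fin n, ¬ (i : ℕ) < k₂ → a i = 0) ↔
        a ∈ parityFiber A (g₁ x) := by
    simp [parityFiber, A]
  have hbox₂ (a : Fin n → ZMod 2) :
      (∑ i ∈ B, (c i + a i) = p ∧ ∀ i : Fin n, ¬ k₁ ≤ (i : ℕ) + 1 → c i + a i = 0) ↔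
        c - a ∈ parityFiber B p := by
    simp [parityFiber, B, CharTwo.sub_eq_add]
  simp only [hbox₁, hbox₂, ite_zero_mul_ite_zero]
  rw [← sum_filter, sum_const,
    card_filter_mem_parityFiber_and_sub_mem hAB (card_pos.mp (by omega)), nsmul_eq_mul]
  split_ifs
  · rw [ZMod.card, hK, Nat.add_sub_cancel]
    push_cast
    rw [← zpow_natCast, ← zpow_add₀ two_ne_zero, ← zpow_add₀ two_ne_zero]
    congr 1
    push_cast [Nat.cast_sub h12.le]
    ring
  · simp

/-- Parallel composition of two full-correlation boxes (parties are 1-based: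
party p corresponds to index `i : Fin n` with `p = i + 1`).
`P₁` acts on parties 1,…,k₂ with parity `g₁`; `P₂` acts on parties k₁,…,n with
parity `∏_{i=k₁}^{k₃} x_i`.  Boxes are padded with output 0 outside their party
sets, so `c_i = a_i` for i < k₁, `c_i = a_i ⊕ b_i` for k₁ ≤ i ≤ k₂ and
`c_i = b_i` for i > k₂ is equivalent to `c = a + b`. -/
theorem parallel_composition_of_full_correlation_boxes
    (n k₁ k₂ k₃ : ℕ) (h0 : 0 < k₁) (h12 : k₁ < k₂) (h23 : k₂ < k₃) (h3n : k₃ ≤ n)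
    (g₁ : (Fin n → ZMod 2) → ZMod 2)
    (hg : ∀ x y : Fin n → ZMod 2,
      (∀ i : Fin n, (i : ℕ) < k₂ → x i = y i) → g₁ x = g₁ y)
    (c x : Fin n → ZMod 2) :
    (∑ a : Fin n → ZMod 2,
      (if (∑ i ∈ Finset.univ.filter (fun i : Fin n => (i : ℕ) < k₂), a i) = g₁ x
            ∧ (∀ i : Fin n, ¬ (i : ℕ) < k₂ → a i = 0)
        then (2:ℝ) ^ (-((k₂:ℤ) - 1)) else 0)
      *
      (if (∑ i ∈ Finset.univ.filter (fun i : Fin n => k₁ ≤ (i : ℕ) + 1), (c i + a i))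
            = (∏ i ∈ Finset.univ.filter
                (fun i : Fin n => k₁ ≤ (i : ℕ) + 1 ∧ (i : ℕ) < k₃), x i)
            ∧ (∀ i : Fin n, ¬ k₁ ≤ (i : ℕ) + 1 → c i + a i = 0)
        then (2:ℝ) ^ (-((n:ℤ) - (k₁:ℤ))) else 0))
    =
    (if (∑ i, c i)
          = g₁ x + (∏ i ∈ Finset.univ.filter
              (fun i : Fin n => k₁ ≤ (i : ℕ) + 1 ∧ (i : ℕ) < k₃), x i)
      then (2:ℝ) ^ (-((n:ℤ) - 1)) else 0) :=
  parallel_composition_of_full_correlation_boxes_general n k₁ k₂ k₃ h0 h12 h23 h3n g₁ c x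
end
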